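/- arXiv:2108.09520 — 5 statements merged into one kernel-verified Lean document; each statement's English description precedes it below -/
import Mathlib

section
/- Let α > 1 and 0 < L ≤ U. There exists a constant C > 0, depending only on α, L and U (and not on p or ξ), such that for every p ≥ 1 and every vector ξ ∈ R^p whose descending rearrangement |ξ_{(1)}| ≥ |ξ_{(2)}| ≥ … ≥ |ξ_{(p)}| satisfies L j^{−α} ≤ |ξ_{(j)}| ≤ U j^{−α} for every 1 ≤ j ≤ p, and for every subset J ⊆ {1, …, p}, one has ‖ξ(J)‖₁ ≤ C ( ‖ξ(J)‖₂² )^{(α−1)/(2α−1)}, where ξ(J) = (ξ_j)_{j ∈ J}. -/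
open Finset Real

/-!
Split `ξ(J)` at the threshold `t = S ^ (α / (2α - 1))`, where `S = ‖ξ(J)‖₂²`. Entries above `t`
contribute at most `S / t` to `‖ξ(J)‖₁`. An entry of size at most `t` has rank at least
`R = (L / t) ^ (1 / α)` by the lower decay bound, so by the upper bound the small entries contribute
at most `U ∑_{n ≥ R} n ^ (-α) ≲ R ^ (1 - α) ∼ t ^ ((α - 1) / α)`. The choice of `t` makes both
contributions multiples of `S ^ ((α - 1) / (2α - 1))`.
-/

theorem sum_Ico_rpow_neg_le {α : ℝ} (hα : 1 < α) {a : ℕ} (ha : 0 < a) (b : ℕ) :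
    ∑ i ∈ Ico a b, ((i : ℝ) + 1) ^ (-α) ≤ (a : ℝ) ^ (1 - α) / (α - 1) := by
  have hα1 : 0 < α - 1 := by linarith
  rcases le_or_gt a b with hab | hba
  · have ha' : (0 : ℝ) < a := by exact_mod_cast ha
    have hanti : AntitoneOn (fun x : ℝ ↦ x ^ (-α)) (Set.Icc a b) := fun x hx y _ hxy ↦
      rpow_le_rpow_of_nonpos (ha'.trans_le hx.1) hxy (by linarith)
    have hint :
        ∫ x in (a : ℝ)..b, x ^ (-α) = ((b : ℝ) ^ (1 - α) - (a : ℝ) ^ (1 - α)) / (1 - α) := by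
      rw [integral_rpow (Or.inr ⟨by linarith, fun h0 ↦ ?_⟩), neg_add_eq_sub]
      rw [Set.uIcc_of_le (by exact_mod_cast hab)] at h0
      exact h0.1.not_gt ha'
    calc ∑ i ∈ Ico a b, ((i : ℝ) + 1) ^ (-α)
        ≤ ∫ x in (a : ℝ)..b, x ^ (-α) := by
          simpa using hanti.sum_le_integral_Ico hab
      _ = ((a : ℝ) ^ (1 - α) - (b : ℝ) ^ (1 - α)) / (α - 1) := by
          rw [hint, ← neg_div_neg_eq, neg_sub, neg_sub]
      _ ≤ (a : ℝ) ^ (1 - α) / (α - 1) := by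
          gcongr
          exact sub_le_self _ (by positivity)
  · rw [Ico_eq_empty_of_le hba.le, sum_empty]
    positivity

theorem sum_rpow_neg_le_of_le {α R : ℝ} (hα : 1 < α) (hR : 0 < R) {S : Finset ℕ}
    (hS : ∀ s ∈ S, R ≤ (s : ℝ) + 1) :
    ∑ s ∈ S, ((s : ℝ) + 1) ^ (-α) ≤ α / (α - 1) * R ^ (1 - α) := by
  have hα1 : 0 < α - 1 := by linarith
  rcases S.eq_empty_or_nonempty with rfl | hne
  · rw [sum_empty]; positivity
  set m := S.min' hne
  have hm : (1 : ℝ) ≤ (m : ℝ) + 1 := by simp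
  have htail : S.erase m ⊆ Ico (m + 1) (S.max' hne + 1) := fun s hs ↦ by
    obtain ⟨hsm, hs⟩ := mem_erase.mp hs
    exact mem_Ico.mpr ⟨(S.min'_le s hs).lt_of_ne' hsm, Nat.lt_succ_of_le (S.le_max' s hs)⟩
  calc ∑ s ∈ S, ((s : ℝ) + 1) ^ (-α)
      = ((m : ℝ) + 1) ^ (-α) + ∑ s ∈ S.erase m, ((s : ℝ) + 1) ^ (-α) :=
        (add_sum_erase S _ (S.min'_mem hne)).symm
    _ ≤ ((m : ℝ) + 1) ^ (1 - α) + ((m : ℝ) + 1) ^ (1 - α) / (α - 1) := by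
        refine add_le_add (rpow_le_rpow_of_exponent_le hm (by linarith)) ?_
        calc _ ≤ ∑ s ∈ Ico (m + 1) (S.max' hne + 1), ((s : ℝ) + 1) ^ (-α) :=
                sum_le_sum_of_subset_of_nonneg htail fun _ _ _ ↦ by positivity
          _ ≤ _ := by exact_mod_cast sum_Ico_rpow_neg_le hα m.succ_pos _
    _ = α / (α - 1) * ((m : ℝ) + 1) ^ (1 - α) := by field_simp; ring
    _ ≤ α / (α - 1) * R ^ (1 - α) := by
        have := rpow_le_rpow_of_nonpos hR (hS m (S.min'_mem hne)) (by linarith : 1 - α ≤ 0)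
        gcongr

theorem le_rpow_inv_of_mul_rpow_neg_le {α L t y : ℝ} (hα : 0 < α) (hL : 0 < L) (ht : 0 < t)
    (hy : 0 < y) (h : L * y ^ (-α) ≤ t) : (L / t) ^ α⁻¹ ≤ y := by
  have : L / t ≤ y ^ α := by
    rw [rpow_neg hy.le, ← div_eq_mul_inv, div_le_iff₀ (by positivity)] at h
    rwa [div_le_iff₀ ht, mul_comm]
  calc (L / t) ^ α⁻¹ ≤ (y ^ α) ^ α⁻¹ := by gcongr
    _ = y := rpow_rpow_inv hy.le hα.ne'

theorem sum_abs_le_sum_sq_div_add {ι : Type*} (x : ι → ℝ) (J : Finset ι) {t : ℝ} (ht : 0 < t) :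
    ∑ i ∈ J, |x i| ≤ (∑ i ∈ J, x i ^ 2) / t + ∑ i ∈ J with |x i| ≤ t, |x i| := by
  rw [← sum_filter_not_add_sum_filter J (fun i ↦ |x i| ≤ t), sum_div]
  gcongr
  calc ∑ i ∈ J with ¬|x i| ≤ t, |x i| ≤ ∑ i ∈ J with ¬|x i| ≤ t, x i ^ 2 / t := by
        gcongr with i hi
        rw [le_div_iff₀ ht, ← sq_abs, sq]
        exact mul_le_mul_of_nonneg_left (not_le.mp (mem_filter.mp hi).2).le (abs_nonneg _)
    _ ≤ ∑ i ∈ J, x i ^ 2 / t :=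
        sum_le_sum_of_subset_of_nonneg (filter_subset _ _) fun _ _ _ ↦ by positivity

theorem sum_abs_filter_le_of_rpow_decay {ι : Type*} {α L U t : ℝ} (hα : 1 < α) (hL : 0 < L)
    (hU : 0 ≤ U) (ht : 0 < t) {x : ι → ℝ} {r : ι → ℕ} (hr : Function.Injective r)
    (hlo : ∀ i, L * ((r i : ℝ) + 1) ^ (-α) ≤ |x i|) (hup : ∀ i, |x i| ≤ U * ((r i : ℝ) + 1) ^ (-α))
    (J : Finset ι) :
    ∑ i ∈ J with |x i| ≤ t, |x i| ≤ U * (α / (α - 1)) * L ^ ((1 - α) / α) * t ^ ((α - 1) / α) := by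
  set R := (L / t) ^ α⁻¹
  have hrank : ∀ s ∈ (J.filter fun i ↦ |x i| ≤ t).image r, R ≤ (s : ℝ) + 1 := by
    simp only [mem_image, mem_filter]
    rintro _ ⟨i, ⟨-, hi⟩, rfl⟩
    exact le_rpow_inv_of_mul_rpow_neg_le (by linarith) hL ht (by positivity) ((hlo i).trans hi)
  have hR : R ^ (1 - α) = L ^ ((1 - α) / α) * t ^ ((α - 1) / α) := by
    rw [← rpow_mul (div_pos hL ht).le, div_rpow hL.le ht.le, div_eq_mul_inv, ← rpow_neg ht.le]
    ring_nf
  calc ∑ i ∈ J with |x i| ≤ t, |x i| ≤ ∑ i ∈ J with |x i| ≤ t, U * ((r i : ℝ) + 1) ^ (-α) :=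
        sum_le_sum fun i _ ↦ hup i
    _ = U * ∑ s ∈ (J.filter fun i ↦ |x i| ≤ t).image r, ((s : ℝ) + 1) ^ (-α) := by
        rw [sum_image hr.injOn, mul_sum]
    _ ≤ U * (α / (α - 1) * R ^ (1 - α)) := by
        gcongr
        exact sum_rpow_neg_le_of_le hα (by positivity) hrank
    _ = U * (α / (α - 1)) * L ^ ((1 - α) / α) * t ^ ((α - 1) / α) := by
        rw [hR]
        ring

/-- Two-sided polynomial decay of the ordered magnitudes implies the polynomial-decay
class condition of Assumption 3(a): there is `C > 0`, depending only on `α, L, U`,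
such that any `ξ ∈ ℝ^p` whose descending rearrangement satisfies
`L j^{−α} ≤ |ξ_{(j)}| ≤ U j^{−α}` obeys
`‖ξ(J)‖₁ ≤ C (‖ξ(J)‖₂²)^{(α−1)/(2α−1)}` for every `J ⊆ {1, …, p}`. -/
theorem stmt_6 (α L U : ℝ) (hα : 1 < α) (hL : 0 < L) (hLU : L ≤ U) :
    ∃ C : ℝ, 0 < C ∧
      ∀ (p : ℕ), 1 ≤ p →
      ∀ (ξ : Fin p → ℝ) (e : Fin p ≃ Fin p),
        (∀ j k : Fin p, j ≤ k → |ξ (e k)| ≤ |ξ (e j)|) →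
        (∀ j : Fin p,
          L * ((j : ℝ) + 1) ^ (-α) ≤ |ξ (e j)| ∧ |ξ (e j)| ≤ U * ((j : ℝ) + 1) ^ (-α)) →
        ∀ J : Finset (Fin p),
          ∑ j ∈ J, |ξ j| ≤ C * (∑ j ∈ J, (ξ j) ^ 2) ^ ((α - 1) / (2 * α - 1)) := by
  have hU : 0 < U := hL.trans_le hLU
  have h2α : 0 < 2 * α - 1 := by linarith
  set θ := (α - 1) / (2 * α - 1)
  set K := U * (α / (α - 1)) * L ^ ((1 - α) / α)
  refine ⟨1 + K, by positivity, fun p _ ξ e _ hdecay J ↦ ?_⟩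
  set S := ∑ j ∈ J, ξ j ^ 2
  rcases (sum_nonneg fun j _ ↦ sq_nonneg (ξ j) : 0 ≤ S).eq_or_lt with hS | hS
  · have hzero : ∀ j ∈ J, ξ j = 0 := by
      simpa [S, sum_eq_zero_iff_of_nonneg, sq_nonneg] using hS.symm
    rw [show S = 0 from hS.symm, zero_rpow (div_pos (by linarith) h2α).ne', mul_zero,
      sum_eq_zero fun j hj ↦ by rw [hzero j hj, abs_zero]]
  set t := S ^ (α / (2 * α - 1))
  have ht : 0 < t := rpow_pos_of_pos hS _
  have hbig : S / t = S ^ θ := by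
    rw [show θ = 1 - α / (2 * α - 1) by
      rw [eq_sub_iff_add_eq, ← add_div, div_eq_one_iff_eq h2α.ne']; ring, rpow_sub hS, rpow_one]
  have hsmall : t ^ ((α - 1) / α) = S ^ θ := by
    rw [← rpow_mul hS.le]
    congr 1
    simp only [θ]
    field_simp
  calc ∑ j ∈ J, |ξ j| ≤ S / t + ∑ j ∈ J with |ξ j| ≤ t, |ξ j| := sum_abs_le_sum_sq_div_add ξ J ht
    _ ≤ S ^ θ + K * S ^ θ := by
        rw [hbig, ← hsmall]
        gcongr
        exact sum_abs_filter_le_of_rpow_decay hα hL hU.le ht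
          (Fin.val_injective.comp e.symm.injective) (fun i ↦ by simpa using (hdecay (e.symm i)).1)
          (fun i ↦ by simpa using (hdecay (e.symm i)).2) J
    _ = (1 + K) * S ^ θ := by ring
end

section
/- Let α > 1 and M > 0. There exists a constant C > 0, depending only on α and M (and not on p or ξ), such that for every p ≥ 1 and every vector ξ ∈ R^p with Σ_{j=1}^p |ξ_j|^{1/α} ≤ M, and for every subset J ⊆ {1, …, p}, one has ‖ξ(J)‖₁ ≤ C ( ‖ξ(J)‖₂² )^{(α−1)/(2α−1)}, where ξ(J) = (ξ_j)_{j ∈ J}. -/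
/-!
Split `|ξⱼ| = |ξⱼ|^{1/(2α-1)} · |ξⱼ|^{2(α-1)/(2α-1)}` and apply Hölder with the conjugate
exponents `(2α-1)/α` and `(2α-1)/(α-1)`: this interpolates `‖ξ(J)‖₁` between the `ℓ^{1/α}`
quasi-norm, which is at most `M`, and `‖ξ(J)‖₂²`. Hence `C = M^{α/(2α-1)}` works.
-/

namespace Real

theorem L1_le_Lq_rpow_mul_Lr_rpow_of_nonneg {ι : Type*} (s : Finset ι) {f : ι → ℝ}
    (hf : ∀ i ∈ s, 0 ≤ f i) {θ η q r : ℝ} (hθ : 0 < θ) (hη : 0 < η) (hθη : θ + η = 1)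
    (hq : 0 ≤ q) (hr : 0 ≤ r) (hqr : θ * q + η * r = 1) :
    ∑ i ∈ s, f i ≤ (∑ i ∈ s, f i ^ q) ^ θ * (∑ i ∈ s, f i ^ r) ^ η := by
  have hconj : HolderConjugate θ⁻¹ η⁻¹ :=
    ⟨by rw [inv_inv, inv_inv, hθη, inv_one], inv_pos.2 hθ, inv_pos.2 hη⟩
  have holder := inner_le_Lp_mul_Lq_of_nonneg s hconj
    (f := fun i => f i ^ (θ * q)) (g := fun i => f i ^ (η * r))
    (fun i hi => rpow_nonneg (hf i hi) _) (fun i hi => rpow_nonneg (hf i hi) _)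
  have hsplit : ∀ i ∈ s, f i ^ (θ * q) * f i ^ (η * r) = f i := fun i hi => by
    rw [← rpow_add_of_nonneg (hf i hi) (by positivity) (by positivity), hqr, rpow_one]
  have hpow : ∀ {t e : ℝ}, 0 < t → ∀ i ∈ s, (f i ^ (t * e)) ^ t⁻¹ = f i ^ e :=
    fun ht i hi => by rw [← rpow_mul (hf i hi), mul_right_comm, mul_inv_cancel₀ ht.ne', one_mul]
  rwa [Finset.sum_congr rfl hsplit, Finset.sum_congr rfl (hpow hθ),
    Finset.sum_congr rfl (hpow hη), one_div, one_div, inv_inv, inv_inv] at holder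

end Real

/-- Polynomial summability is a special case of the polynomial-decay class condition:
for `α > 1` and `M > 0` there is `C > 0`, depending only on `α, M`, such that any
`ξ ∈ ℝ^p` with `∑ⱼ |ξⱼ|^{1/α} ≤ M` obeys
`‖ξ(J)‖₁ ≤ C (‖ξ(J)‖₂²)^{(α−1)/(2α−1)}` for every `J ⊆ {1, …, p}`. -/
theorem stmt_7 (α M : ℝ) (hα : 1 < α) (hM : 0 < M) :
    ∃ C : ℝ, 0 < C ∧
      ∀ (p : ℕ), 1 ≤ p →
      ∀ ξ : Fin p → ℝ,
        (∑ j : Fin p, |ξ j| ^ (1 / α)) ≤ M →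
        ∀ J : Finset (Fin p),
          ∑ j ∈ J, |ξ j| ≤ C * (∑ j ∈ J, (ξ j) ^ 2) ^ ((α - 1) / (2 * α - 1)) := by
  have ha : 0 < 2 * α - 1 := by linarith
  refine ⟨M ^ (α / (2 * α - 1)), by positivity, fun p _ ξ hξ J => ?_⟩
  have hJ : ∑ j ∈ J, |ξ j| ^ (1 / α) ≤ M :=
    (Finset.sum_le_sum_of_subset_of_nonneg J.subset_univ fun j _ _ => by positivity).trans hξ
  calc ∑ j ∈ J, |ξ j|
      ≤ (∑ j ∈ J, |ξ j| ^ (1 / α)) ^ (α / (2 * α - 1)) *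
          (∑ j ∈ J, |ξ j| ^ (2 : ℝ)) ^ ((α - 1) / (2 * α - 1)) :=
        Real.L1_le_Lq_rpow_mul_Lr_rpow_of_nonneg J (fun j _ => abs_nonneg _)
          (div_pos (by linarith) ha) (div_pos (by linarith) ha)
          (by rw [← add_div, div_eq_one_iff_eq ha.ne']; ring) (by positivity)
          zero_le_two
          (by field_simp; rw [div_eq_one_iff_eq (by linarith)]; ring)
    _ ≤ M ^ (α / (2 * α - 1)) * (∑ j ∈ J, (ξ j) ^ 2) ^ ((α - 1) / (2 * α - 1)) := by
        simp only [Real.rpow_two, sq_abs]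
        gcongr
end

section
/- Let α' > 0 and 0 < L' ≤ U'. There exists a constant C₁ > 1, depending only on α', L' and U' (and not on p or ξ), such that for every p ≥ 1 and every vector ξ ∈ R^p whose descending rearrangement |ξ_{(1)}| ≥ |ξ_{(2)}| ≥ … ≥ |ξ_{(p)}| satisfies L' exp(−α' j) ≤ |ξ_{(j)}| ≤ U' exp(−α' j) for every 1 ≤ j ≤ p, and for every nonempty subset J ⊆ {1, …, p}, one has ‖ξ(J)‖₁ ≤ C₁ ‖ξ(J)‖_∞, where ξ(J) = (ξ_j)_{j ∈ J}. -/
open Finset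

/-!
Write `q = exp (-α')` and let `k i` be the rank of `|ξ i|` in the descending rearrangement, so
that `L' q^(k i) ≤ |ξ i| ≤ U' q^(k i)`. On a set `J` the ranks are distinct, hence the sum is at
most `U'` times a geometric tail starting at the smallest rank `m` in `J`, i.e. `U' q^m / (1 - q)`,
while the entry of rank `m` alone is at least `L' q^m`. So `C₁ = U' / (L' (1 - q)) + 1` works.
-/

section GeometricProfile

variable {K : Type*} [Field K] [LinearOrder K] [IsStrictOrderedRing K] {q : K}

theorem Finset.sum_pow_le_pow_div_one_sub {S : Finset ℕ} {m : ℕ} (hm : ∀ n ∈ S, m ≤ n)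
    (hq0 : 0 ≤ q) (hq1 : q < 1) : ∑ n ∈ S, q ^ n ≤ q ^ m / (1 - q) := by
  have hsub : S ⊆ Ico m (S.sup id + 1) := fun n hn =>
    mem_Ico.mpr ⟨hm n hn, Nat.lt_succ_of_le (le_sup (f := id) hn)⟩
  calc ∑ n ∈ S, q ^ n ≤ ∑ n ∈ Ico m (S.sup id + 1), q ^ n :=
        sum_le_sum_of_subset_of_nonneg hsub fun n _ _ => pow_nonneg hq0 n
    _ ≤ q ^ m / (1 - q) := geom_sum_Ico_le_of_lt_one hq0 hq1

theorem Finset.sum_pow_comp_le_pow_div_one_sub {ι : Type*} {S : Finset ι} {k : ι → ℕ}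
    (hk : Set.InjOn k S) {m : ℕ} (hm : ∀ i ∈ S, m ≤ k i) (hq0 : 0 ≤ q) (hq1 : q < 1) :
    ∑ i ∈ S, q ^ k i ≤ q ^ m / (1 - q) := by
  rw [← sum_image hk]
  exact sum_pow_le_pow_div_one_sub (by simpa using hm) hq0 hq1

theorem Finset.sum_abs_le_of_geometric_profile {ι : Type*} {S : Finset ι} (hS : S.Nonempty)
    {a : ι → K} {k : ι → ℕ} (hk : Set.InjOn k S) {L U : K} (hL : 0 < L) (hLU : L ≤ U)
    (hq0 : 0 ≤ q) (hq1 : q < 1) (hbd : ∀ i ∈ S, L * q ^ k i ≤ |a i| ∧ |a i| ≤ U * q ^ k i) :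
    ∑ i ∈ S, |a i| ≤ U / (L * (1 - q)) * S.sup' hS (fun i => |a i|) := by
  obtain ⟨i₀, hi₀, hmin⟩ := exists_min_image S k hS
  have hC : 0 ≤ U / (L * (1 - q)) :=
    div_nonneg (hL.le.trans hLU) (mul_nonneg hL.le (sub_nonneg.mpr hq1.le))
  calc ∑ i ∈ S, |a i| ≤ ∑ i ∈ S, U * q ^ k i := sum_le_sum fun i hi => (hbd i hi).2
    _ = U * ∑ i ∈ S, q ^ k i := (mul_sum S _ U).symm
    _ ≤ U * (q ^ k i₀ / (1 - q)) :=
        mul_le_mul_of_nonneg_left (sum_pow_comp_le_pow_div_one_sub hk hmin hq0 hq1)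
          (hL.le.trans hLU)
    _ = U / (L * (1 - q)) * (L * q ^ k i₀) := by
        field_simp [hL.ne', (sub_pos.mpr hq1).ne']
    _ ≤ U / (L * (1 - q)) * S.sup' hS (fun i => |a i|) :=
        mul_le_mul_of_nonneg_left ((hbd i₀ hi₀).1.trans (le_sup' (fun i => |a i|) hi₀)) hC

end GeometricProfile

theorem Real.exp_neg_mul_natCast_add_one (a : ℝ) (n : ℕ) :
    Real.exp (-(a * ((n : ℝ) + 1))) = Real.exp (-a) ^ (n + 1) := by
  rw [← Real.exp_nat_mul]
  push_cast
  ring_nf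

/-- Two-sided exponential decay of the ordered magnitudes implies the
exponential-decay class condition of Assumption 3(b): there is `C₁ > 1`, depending
only on `α', L', U'`, such that any `ξ ∈ ℝ^p` whose descending rearrangement
satisfies `L' exp(−α' j) ≤ |ξ_{(j)}| ≤ U' exp(−α' j)` obeys
`‖ξ(J)‖₁ ≤ C₁ ‖ξ(J)‖_∞` for every nonempty `J ⊆ {1, …, p}`. -/
theorem stmt_8 (α' L' U' : ℝ) (hα' : 0 < α') (hL' : 0 < L') (hLU : L' ≤ U') :
    ∃ C₁ : ℝ, 1 < C₁ ∧
      ∀ (p : ℕ), 1 ≤ p →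
      ∀ (ξ : Fin p → ℝ) (e : Fin p ≃ Fin p),
        (∀ j k : Fin p, j ≤ k → |ξ (e k)| ≤ |ξ (e j)|) →
        (∀ j : Fin p,
          L' * Real.exp (-(α' * ((j : ℝ) + 1))) ≤ |ξ (e j)| ∧
            |ξ (e j)| ≤ U' * Real.exp (-(α' * ((j : ℝ) + 1)))) →
        ∀ (J : Finset (Fin p)) (hJ : J.Nonempty),
          ∑ j ∈ J, |ξ j| ≤ C₁ * J.sup' hJ (fun j => |ξ j|) := by
  set q := Real.exp (-α')
  have hq1 : q < 1 := Real.exp_lt_one_iff.mpr (neg_lt_zero.mpr hα')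
  have hC : 0 < U' / (L' * (1 - q)) :=
    div_pos (hL'.trans_le hLU) (mul_pos hL' (sub_pos.mpr hq1))
  refine ⟨U' / (L' * (1 - q)) + 1, by linarith, fun p _ ξ e _ hbd J hJ => ?_⟩
  have hrank : Set.InjOn (fun i => (e.symm i : ℕ) + 1) J := fun i _ j _ hij =>
    e.symm.injective (Fin.ext (Nat.succ_injective hij))
  have hprofile := sum_abs_le_of_geometric_profile hJ hrank hL' hLU (Real.exp_pos _).le hq1
    fun i _ => by simpa [Real.exp_neg_mul_natCast_add_one] using hbd (e.symm i)
  have hsup : 0 ≤ J.sup' hJ (fun j => |ξ j|) :=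
    (abs_nonneg _).trans (le_sup' (fun j => |ξ j|) hJ.choose_spec)
  exact hprofile.trans (mul_le_mul_of_nonneg_right (le_add_of_nonneg_right zero_le_one) hsup)
end

section
/- Let X = (X_1, …, X_p) be a square-integrable random vector in R^p with λ_min(E[X X']) ≥ λ₁ > 0 and max_{1≤j≤p} E[X_j²] ≤ σ̄² for some σ̄ > 0. Let α > 1 and C_α > 0, and let β ∈ R^p satisfy the polynomial-decay class condition: ‖β(J)‖₁ ≤ C_α (‖β(J)‖₂²)^{(α−1)/(2α−1)} for every J ⊆ {1, …, p}. Set D = Σ_{j=1}^p β_j X_j, fix J ⊆ {1, …, p}, and let V = D − P_J D, where P_J is the orthogonal projection in L² onto span{X_j : j ∈ J}. Then, with σ_j = √(E[X_j²]), E[V²] ≤ ( σ̄ C_α max_{1≤j≤p} |E[V X_j]| / σ_j )^{2 − 1/α} · λ₁^{−1 + 1/α}. -/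
/-! Write `V = ∑ⱼ γⱼ Xⱼ` with `γ = β` off `J`. The Gram matrix gives
`E[V²] = γᵀΓγ ≥ λ₁ ∑_{j∉J} βⱼ²`, while orthogonality of `V` to the `Xⱼ`, `j ∈ J`, gives
`E[V²] = ∑_{j∉J} βⱼ E[V Xⱼ] ≤ σ̄ M ∑_{j∉J} |βⱼ|` with `M = maxⱼ |E[V Xⱼ]| / σⱼ`; the class
condition bounds this by `σ̄ C_α M (∑_{j∉J} βⱼ²)^θ`, `θ = (α-1)/(2α-1)`. Hence
`E[V²] ≤ σ̄ C_α M (E[V²]/λ₁)^θ`, and solving for `E[V²]` produces the exponents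
`1/(1-θ) = 2 - 1/α` and `-θ/(1-θ) = -1 + 1/α`. -/

open MeasureTheory Finset Matrix

open scoped MatrixOrder in
theorem Matrix.IsHermitian.posSemidef_sub_smul_one {n : Type*} [Fintype n] [DecidableEq n]
    {A : Matrix n n ℝ} (hA : A.IsHermitian) {c : ℝ} (hc : ∀ i, c ≤ hA.eigenvalues i) :
    (A - c • 1).PosSemidef := by
  have : algebraMap ℝ (Matrix n n ℝ) c ≤ A := by
    refine algebraMap_le_of_le_spectrum (fun x hx => ?_) hA
    obtain ⟨i, rfl⟩ := hA.spectrum_real_eq_range_eigenvalues ▸ hx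
    exact hc i
  simpa [Matrix.le_iff, Algebra.algebraMap_eq_smul_one] using this

theorem Matrix.IsHermitian.mul_dotProduct_self_le {n : Type*} [Fintype n] [DecidableEq n]
    {A : Matrix n n ℝ} (hA : A.IsHermitian) {c : ℝ} (hc : ∀ i, c ≤ hA.eigenvalues i)
    (x : n → ℝ) : c * (x ⬝ᵥ x) ≤ x ⬝ᵥ A *ᵥ x := by
  have h := (hA.posSemidef_sub_smul_one hc).dotProduct_mulVec_nonneg x
  rw [star_trivial, sub_mulVec, dotProduct_sub, smul_mulVec, one_mulVec, dotProduct_smul,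
    smul_eq_mul] at h
  linarith

theorem Real.le_rpow_mul_rpow_of_le_mul_div_rpow {E K c θ : ℝ} (hE : 0 ≤ E) (hK : 0 ≤ K)
    (hc : 0 < c) (hθ : θ < 1) (h : E ≤ K * (E / c) ^ θ) :
    E ≤ K ^ (1 - θ)⁻¹ * c ^ (-θ / (1 - θ)) := by
  rcases hE.eq_or_lt with rfl | hEpos
  · positivity
  have h1θ : 0 < 1 - θ := by linarith
  have hroot : E ^ (1 - θ) ≤ K * c ^ (-θ) := by
    rw [Real.rpow_sub hEpos, Real.rpow_one, div_le_iff₀ (Real.rpow_pos_of_pos hEpos θ)]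
    calc E ≤ K * (E / c) ^ θ := h
      _ = K * c ^ (-θ) * E ^ θ := by
        rw [Real.div_rpow hE hc.le, Real.rpow_neg hc.le]; ring
  calc E = (E ^ (1 - θ)) ^ (1 - θ)⁻¹ := by
        rw [← Real.rpow_mul hE, mul_inv_cancel₀ h1θ.ne', Real.rpow_one]
    _ ≤ (K * c ^ (-θ)) ^ (1 - θ)⁻¹ := by gcongr
    _ = K ^ (1 - θ)⁻¹ * c ^ (-θ / (1 - θ)) := by
        rw [Real.mul_rpow hK (by positivity), ← Real.rpow_mul hc.le, div_eq_mul_inv]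

theorem Real.le_rpow_two_sub_mul_rpow_of_le_mul_div_rpow {E K c α : ℝ} (hE : 0 ≤ E)
    (hK : 0 ≤ K) (hc : 0 < c) (hα : 1 < α) (h : E ≤ K * (E / c) ^ ((α - 1) / (2 * α - 1))) :
    E ≤ K ^ (2 - 1 / α) * c ^ (-1 + 1 / α) := by
  have h2α : 2 * α - 1 ≠ 0 := by linarith
  have h1θ : 1 - (α - 1) / (2 * α - 1) = α / (2 * α - 1) := by
    rw [eq_div_iff h2α, sub_mul, div_mul_cancel₀ _ h2α]; ring
  have key := le_rpow_mul_rpow_of_le_mul_div_rpow hE hK hc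
    ((div_lt_one (by linarith)).2 (by linarith)) h
  rwa [h1θ, neg_div, div_div_div_cancel_right₀ h2α,
    show (α / (2 * α - 1))⁻¹ = 2 - 1 / α by field_simp,
    show -((α - 1) / α) = -1 + 1 / α by field_simp; ring] at key

theorem abs_le_iSup_abs_div_mul {ι : Type*} [Finite ι] {f σ : ι → ℝ} {j : ι} (hσ : 0 ≤ σ j)
    (hf : σ j = 0 → f j = 0) : |f j| ≤ (⨆ i, |f i| / σ i) * σ j := by
  rcases hσ.eq_or_lt with h | h
  · simp [← h, hf h.symm]
  · exact (div_le_iff₀ h).1 (le_ciSup (f := fun i => |f i| / σ i) (Finite.bddAbove_range _) j)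

theorem exists_eq_sum_mul_of_eq_sub_sum_mul {Ω ι : Type*} [Fintype ι] {X : ι → Ω → ℝ}
    {V : Ω → ℝ} {J : Finset ι} {β c : ι → ℝ}
    (hV : ∀ ω, V ω = ∑ j, β j * X j ω - ∑ j ∈ J, c j * X j ω) :
    ∃ γ : ι → ℝ, (∀ j ∉ J, γ j = β j) ∧ ∀ ω, V ω = ∑ j, γ j * X j ω := by
  classical
  refine ⟨fun j => β j - if j ∈ J then c j else 0, fun j hj => by simp [hj], fun ω => ?_⟩
  simp_rw [hV, sub_mul, sum_sub_distrib, ite_mul, zero_mul, sum_ite_mem, univ_inter]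

section LinearCombination

variable {Ω ι : Type*} [MeasurableSpace Ω] {μ : Measure Ω} {X : ι → Ω → ℝ} {V : Ω → ℝ}

theorem integral_mul_eq_zero_of_integral_sq_eq_zero {g : Ω → ℝ} (hg : MemLp g 2 μ)
    (h : ∫ ω, g ω ^ 2 ∂μ = 0) : ∫ ω, V ω * g ω ∂μ = 0 := by
  have hg0 : (fun ω => g ω ^ 2) =ᵐ[μ] 0 :=
    (integral_eq_zero_iff_of_nonneg (fun ω => sq_nonneg _) hg.integrable_sq).1 h
  refine integral_eq_zero_of_ae ?_
  filter_upwards [hg0] with ω hω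
  simp [pow_eq_zero_iff two_ne_zero |>.1 hω]

theorem abs_integral_mul_le_iSup_mul [Finite ι] (hX : ∀ j, MemLp (X j) 2 μ) (j : ι) :
    |∫ ω, V ω * X j ω ∂μ|
      ≤ (⨆ i, |∫ ω, V ω * X i ω ∂μ| / √(∫ ω, X i ω ^ 2 ∂μ)) * √(∫ ω, X j ω ^ 2 ∂μ) :=
  abs_le_iSup_abs_div_mul (f := fun i => ∫ ω, V ω * X i ω ∂μ)
    (σ := fun i => √(∫ ω, X i ω ^ 2 ∂μ)) (Real.sqrt_nonneg _) fun h =>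
    integral_mul_eq_zero_of_integral_sq_eq_zero (hX j)
      ((Real.sqrt_eq_zero (integral_nonneg fun _ => sq_nonneg _)).1 h)

theorem integral_mul_sum_mul (hV : MemLp V 2 μ) (hX : ∀ j, MemLp (X j) 2 μ) (s : Finset ι)
    (γ : ι → ℝ) :
    ∫ ω, V ω * ∑ j ∈ s, γ j * X j ω ∂μ = ∑ j ∈ s, γ j * ∫ ω, V ω * X j ω ∂μ := by
  simp_rw [Finset.mul_sum, mul_left_comm (V _), ← integral_const_mul]
  exact integral_finsetSum s fun j _ => (hV.integrable_mul (hX j)).const_mul (γ j)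

variable [Fintype ι]

theorem integral_sq_eq_sum_mul_integral_mul (hX : ∀ j, MemLp (X j) 2 μ) {γ : ι → ℝ}
    (hV : ∀ ω, V ω = ∑ j, γ j * X j ω) :
    ∫ ω, V ω ^ 2 ∂μ = ∑ j, γ j * ∫ ω, V ω * X j ω ∂μ := by
  have hVL2 : MemLp V 2 μ := funext hV ▸ memLp_finsetSum univ fun j _ => (hX j).const_mul (γ j)
  simp_rw [sq, ← integral_mul_sum_mul hVL2 hX, ← hV]

theorem integral_sq_eq_dotProduct_mulVec (hX : ∀ j, MemLp (X j) 2 μ) {Γ : Matrix ι ι ℝ}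
    (hΓ : ∀ j k, Γ j k = ∫ ω, X j ω * X k ω ∂μ) {γ : ι → ℝ}
    (hV : ∀ ω, V ω = ∑ j, γ j * X j ω) :
    ∫ ω, V ω ^ 2 ∂μ = γ ⬝ᵥ Γ *ᵥ γ := by
  rw [integral_sq_eq_sum_mul_integral_mul hX hV]
  refine Finset.sum_congr rfl fun j _ => congrArg (γ j * ·) ?_
  simp_rw [hV, mul_comm _ (X j _), integral_mul_sum_mul (hX j) hX, mulVec, dotProduct, hΓ,
    mul_comm (γ _)]

variable [DecidableEq ι] {J : Finset ι} {β γ : ι → ℝ}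

theorem mul_sum_compl_sq_le_integral_sq (hX : ∀ j, MemLp (X j) 2 μ) {Γ : Matrix ι ι ℝ}
    (hΓdef : ∀ j k, Γ j k = ∫ ω, X j ω * X k ω ∂μ) (hΓ : Γ.IsHermitian) {c : ℝ} (hc₀ : 0 ≤ c)
    (hc : ∀ i, c ≤ hΓ.eigenvalues i) (hγ : ∀ j ∉ J, γ j = β j)
    (hV : ∀ ω, V ω = ∑ j, γ j * X j ω) :
    c * ∑ j ∈ Jᶜ, β j ^ 2 ≤ ∫ ω, V ω ^ 2 ∂μ := by
  have hβγ : ∑ j ∈ Jᶜ, β j ^ 2 ≤ γ ⬝ᵥ γ := by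
    calc ∑ j ∈ Jᶜ, β j ^ 2 = ∑ j ∈ Jᶜ, γ j ^ 2 :=
          sum_congr rfl fun j hj => by rw [hγ j (mem_compl.1 hj)]
      _ ≤ ∑ j, γ j ^ 2 := sum_le_univ_sum_of_nonneg fun j => sq_nonneg _
      _ = γ ⬝ᵥ γ := by simp only [dotProduct, sq]
  calc c * ∑ j ∈ Jᶜ, β j ^ 2 ≤ c * (γ ⬝ᵥ γ) := by gcongr
    _ ≤ γ ⬝ᵥ Γ *ᵥ γ := hΓ.mul_dotProduct_self_le hc γ
    _ = ∫ ω, V ω ^ 2 ∂μ := (integral_sq_eq_dotProduct_mulVec hX hΓdef hV).symm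

theorem integral_sq_le_mul_sum_compl_abs (hX : ∀ j, MemLp (X j) 2 μ) (hγ : ∀ j ∉ J, γ j = β j)
    (hV : ∀ ω, V ω = ∑ j, γ j * X j ω) (horth : ∀ j ∈ J, ∫ ω, V ω * X j ω ∂μ = 0) {K : ℝ}
    (hK : ∀ j, |∫ ω, V ω * X j ω ∂μ| ≤ K) :
    ∫ ω, V ω ^ 2 ∂μ ≤ K * ∑ j ∈ Jᶜ, |β j| := by
  rw [integral_sq_eq_sum_mul_integral_mul hX hV, ← sum_add_sum_compl J,
    sum_eq_zero fun j hj => by rw [horth j hj, mul_zero], zero_add, mul_sum]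
  refine sum_le_sum fun j hj => ?_
  rw [hγ j (mem_compl.1 hj)]
  calc β j * ∫ ω, V ω * X j ω ∂μ ≤ |β j| * |∫ ω, V ω * X j ω ∂μ| := by
        rw [← abs_mul]; exact le_abs_self _
    _ ≤ |β j| * K := by gcongr; exact hK j
    _ = K * |β j| := mul_comm _ _

end LinearCombination

theorem stmt_13_general (p : ℕ)
    (Ω : Type*) [MeasurableSpace Ω] (μ : Measure Ω)
    (X : Fin p → Ω → ℝ) (hX : ∀ j, MemLp (X j) 2 μ)
    (Γ : Matrix (Fin p) (Fin p) ℝ)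
    (hΓdef : ∀ j k, Γ j k = ∫ ω, X j ω * X k ω ∂μ)
    (hΓ : Γ.IsHermitian)
    (lam₁ : ℝ) (hlam₁ : 0 < lam₁) (hmin : lam₁ ≤ ⨅ i, hΓ.eigenvalues i)
    (σbar : ℝ) (hσbar : 0 < σbar)
    (hsecond : ∀ j, ∫ ω, (X j ω) ^ 2 ∂μ ≤ σbar ^ 2)
    (α Cα : ℝ) (hα : 1 < α) (hCα : 0 < Cα)
    (β : Fin p → ℝ)
    (hclass : ∀ J : Finset (Fin p),
      ∑ j ∈ J, |β j| ≤ Cα * (∑ j ∈ J, (β j) ^ 2) ^ ((α - 1) / (2 * α - 1)))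
    (D : Ω → ℝ) (hD : ∀ ω, D ω = ∑ j : Fin p, β j * X j ω)
    (J : Finset (Fin p)) (V : Ω → ℝ)
    (σ : Fin p → ℝ) (hσ : ∀ j, σ j = Real.sqrt (∫ ω, (X j ω) ^ 2 ∂μ))
    (hVspan : ∃ c : Fin p → ℝ, ∀ ω, V ω = D ω - ∑ j ∈ J, c j * X j ω)
    (hVorth : ∀ j ∈ J, ∫ ω, V ω * X j ω ∂μ = 0) :
    ∫ ω, (V ω) ^ 2 ∂μ
      ≤ (σbar * Cα * ⨆ j : Fin p, |∫ ω, V ω * X j ω ∂μ| / σ j) ^ (2 - 1 / α)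
          * lam₁ ^ (-1 + 1 / α) := by
  obtain ⟨c, hc⟩ := hVspan
  obtain ⟨γ, hγβ, hVγ⟩ := exists_eq_sum_mul_of_eq_sub_sum_mul fun ω => (hc ω).trans (by rw [hD])
  obtain rfl : σ = fun j => √(∫ ω, X j ω ^ 2 ∂μ) := funext hσ
  set E := ∫ ω, V ω ^ 2 ∂μ
  set M := ⨆ j, |∫ ω, V ω * X j ω ∂μ| / √(∫ ω, X j ω ^ 2 ∂μ)
  set θ := (α - 1) / (2 * α - 1)
  have hM : 0 ≤ M := Real.iSup_nonneg fun j => by positivity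
  have hlow : lam₁ * ∑ j ∈ Jᶜ, β j ^ 2 ≤ E :=
    mul_sum_compl_sq_le_integral_sq hX hΓdef hΓ hlam₁.le
      (fun i => hmin.trans (ciInf_le (Finite.bddBelow_range _) i)) hγβ hVγ
  have hσle : ∀ j, √(∫ ω, X j ω ^ 2 ∂μ) ≤ σbar := fun j =>
    (Real.sqrt_le_sqrt (hsecond j)).trans_eq (Real.sqrt_sq hσbar.le)
  have hup : E ≤ σbar * Cα * M * (E / lam₁) ^ θ :=
    calc E ≤ M * σbar * ∑ j ∈ Jᶜ, |β j| :=
          integral_sq_le_mul_sum_compl_abs hX hγβ hVγ hVorth fun j =>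
            (abs_integral_mul_le_iSup_mul hX j).trans (by gcongr; exact hσle j)
      _ ≤ M * σbar * (Cα * (∑ j ∈ Jᶜ, β j ^ 2) ^ θ) := by gcongr; exact hclass Jᶜ
      _ = σbar * Cα * M * (∑ j ∈ Jᶜ, β j ^ 2) ^ θ := by ring
      _ ≤ σbar * Cα * M * (E / lam₁) ^ θ := by
          gcongr
          · exact div_nonneg (by linarith) (by linarith)
          · exact (le_div_iff₀' hlam₁).2 hlow
  exact Real.le_rpow_two_sub_mul_rpow_of_le_mul_div_rpow
    (integral_nonneg fun _ => sq_nonneg _) (by positivity) hlam₁ hα hup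

/-- Display (2.25) in the proof of Theorem 2: under the eigenvalue lower bound
`λ_min(E[XX']) ≥ λ₁ > 0`, the second-moment bound `maxⱼ E[Xⱼ²] ≤ σ̄²`, and the
polynomial-decay class condition on `β`, the residual `V = D − P_J D` of the `L²`
projection of `D = ∑ⱼ βⱼ Xⱼ` onto `span{Xⱼ : j ∈ J}` satisfies
`E[V²] ≤ (σ̄ C_α maxⱼ |E[V Xⱼ]|/σⱼ)^{2 − 1/α} λ₁^{−1 + 1/α}`. -/
theorem stmt_13 (p : ℕ)
    (Ω : Type*) [MeasurableSpace Ω] (μ : Measure Ω) [IsProbabilityMeasure μ]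
    (X : Fin p → Ω → ℝ) (hX : ∀ j, MemLp (X j) 2 μ)
    (Γ : Matrix (Fin p) (Fin p) ℝ)
    (hΓdef : ∀ j k, Γ j k = ∫ ω, X j ω * X k ω ∂μ)
    (hΓ : Γ.IsHermitian)
    (lam₁ : ℝ) (hlam₁ : 0 < lam₁) (hmin : lam₁ ≤ ⨅ i, hΓ.eigenvalues i)
    (σbar : ℝ) (hσbar : 0 < σbar)
    (hsecond : ∀ j, ∫ ω, (X j ω) ^ 2 ∂μ ≤ σbar ^ 2)
    (α Cα : ℝ) (hα : 1 < α) (hCα : 0 < Cα)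
    (β : Fin p → ℝ)
    (hclass : ∀ J : Finset (Fin p),
      ∑ j ∈ J, |β j| ≤ Cα * (∑ j ∈ J, (β j) ^ 2) ^ ((α - 1) / (2 * α - 1)))
    (D : Ω → ℝ) (hD : ∀ ω, D ω = ∑ j : Fin p, β j * X j ω)
    (J : Finset (Fin p)) (V : Ω → ℝ)
    (σ : Fin p → ℝ) (hσ : ∀ j, σ j = Real.sqrt (∫ ω, (X j ω) ^ 2 ∂μ))
    (hVspan : ∃ c : Fin p → ℝ, ∀ ω, V ω = D ω - ∑ j ∈ J, c j * X j ω)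
    (hVorth : ∀ j ∈ J, ∫ ω, V ω * X j ω ∂μ = 0) :
    ∫ ω, (V ω) ^ 2 ∂μ
      ≤ (σbar * Cα * ⨆ j : Fin p, |∫ ω, V ω * X j ω ∂μ| / σ j) ^ (2 - 1 / α)
          * lam₁ ^ (-1 + 1 / α) :=
  stmt_13_general p Ω μ X hX Γ hΓdef hΓ lam₁ hlam₁ hmin σbar hσbar hsecond α Cα hα hCα β hclass D hD
    J V σ hσ hVspan hVorth
end

section
/- Let α > 1 and c > 0, and let (a_m)_{m ≥ 0} be a sequence of nonnegative real numbers satisfying a_{m+1} ≤ a_m ( 1 − c · a_m^{1/(2α−1)} ) for every m ≥ 0. Then there exists a constant G > 0, depending only on α, c and a_0, such that a_m ≤ G · m^{−(2α−1)} for every m ≥ 1. -/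
/-!
With `p = 1/(2α−1) ∈ (0, 1)`, Bernoulli's inequality `(1 − t)^p ≤ 1 − p t` turns the
recursion into `a_{m+1}^{-p} ≥ a_m^{-p} (1 + p c a_m^p) = a_m^{-p} + p c`, so `a_m^{-p}` grows at
least linearly, `a_m^{-p} ≥ p c m`. Raising this to the power `−1/p = −(2α−1)` gives the rate,
with `G = (p c)^{-(2α−1)}`, which does not even depend on `a₀`.
-/

open Real

theorem rpow_neg_add_mul_le_rpow_neg_of_le_mul_one_sub {p c x y : ℝ} (hp0 : 0 < p)
    (hp1 : p ≤ 1) (hx : 0 < x) (hy : 0 < y) (h : y ≤ x * (1 - c * x ^ p)) :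
    x ^ (-p) + p * c ≤ y ^ (-p) := by
  set t := c * x ^ p with ht
  have hxp : 0 < x ^ p := rpow_pos_of_pos hx p
  have ht1 : 0 < 1 - t := pos_of_mul_pos_right (hy.trans_le h) hx.le
  have hbernoulli : (1 - t) ^ p ≤ 1 - p * t := by
    have := rpow_one_add_le_one_add_mul_self (s := -t) (by linarith) hp0.le hp1
    rwa [← sub_eq_add_neg, mul_neg, ← sub_eq_add_neg] at this
  have hpt : 0 < 1 - p * t := by nlinarith
  have hyp : y ^ p ≤ x ^ p * (1 - p * t) :=
    calc y ^ p ≤ (x * (1 - t)) ^ p := rpow_le_rpow hy.le h hp0.le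
      _ = x ^ p * (1 - t) ^ p := mul_rpow hx.le ht1.le
      _ ≤ x ^ p * (1 - p * t) := mul_le_mul_of_nonneg_left hbernoulli hxp.le
  have hcancel : (x ^ p)⁻¹ * t = c := by
    rw [ht, mul_left_comm, inv_mul_cancel₀ hxp.ne', mul_one]
  rw [rpow_neg hx.le, rpow_neg hy.le]
  calc (x ^ p)⁻¹ + p * c = (x ^ p)⁻¹ * (1 + p * t) := by rw [← hcancel]; ring
    _ ≤ (x ^ p * (1 - p * t))⁻¹ := by
        rw [mul_inv]
        refine mul_le_mul_of_nonneg_left ?_ (inv_nonneg.mpr hxp.le)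
        rw [← one_div, le_div_iff₀ hpt]
        nlinarith [sq_nonneg (p * t)]
    _ ≤ (y ^ p)⁻¹ := inv_anti₀ (rpow_pos_of_pos hy p) hyp

section Recursion

variable {p c : ℝ} {a : ℕ → ℝ}

theorem pos_of_pos_succ_of_le_mul_one_sub (hnn : ∀ m, 0 ≤ a m)
    (hrec : ∀ m, a (m + 1) ≤ a m * (1 - c * a m ^ p)) {m : ℕ} (hpos : 0 < a (m + 1)) :
    0 < a m :=
  (hnn m).lt_of_ne fun h => by simpa [← h] using hpos.trans_le (hrec m)

theorem nat_mul_le_rpow_neg_of_le_mul_one_sub (hp0 : 0 < p) (hp1 : p ≤ 1)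
    (hnn : ∀ m, 0 ≤ a m) (hrec : ∀ m, a (m + 1) ≤ a m * (1 - c * a m ^ p)) :
    ∀ m : ℕ, 0 < a m → m * (p * c) ≤ a m ^ (-p)
  | 0, _ => by simpa using rpow_nonneg (hnn 0) _
  | m + 1, hpos => by
    have hm := pos_of_pos_succ_of_le_mul_one_sub hnn hrec hpos
    have ih := nat_mul_le_rpow_neg_of_le_mul_one_sub hp0 hp1 hnn hrec m hm
    push_cast
    linarith [rpow_neg_add_mul_le_rpow_neg_of_le_mul_one_sub hp0 hp1 hm hpos (hrec m)]

theorem le_rpow_neg_inv_of_le_rpow_neg {p k x : ℝ} (hp : 0 < p) (hx : 0 < x) (hk : 0 < k)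
    (h : k ≤ x ^ (-p)) : x ≤ k ^ (-p⁻¹) :=
  calc x = (x ^ (-p)) ^ (-p⁻¹) := by
        rw [← rpow_mul hx.le, neg_mul_neg, mul_inv_cancel₀ hp.ne', rpow_one]
    _ ≤ k ^ (-p⁻¹) := rpow_le_rpow_of_nonpos hk h (by simp [hp.le])

theorem le_mul_rpow_neg_inv_of_le_mul_one_sub (hp0 : 0 < p) (hp1 : p ≤ 1) (hc : 0 < c)
    (hnn : ∀ m, 0 ≤ a m) (hrec : ∀ m, a (m + 1) ≤ a m * (1 - c * a m ^ p))
    {m : ℕ} (hm : 1 ≤ m) : a m ≤ (p * c) ^ (-p⁻¹) * (m : ℝ) ^ (-p⁻¹) := by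
  have hpc : 0 < p * c := mul_pos hp0 hc
  have hm0 : (0 : ℝ) < m := by exact_mod_cast hm
  rcases (hnn m).eq_or_lt with h0 | hpos
  · rw [← h0]
    positivity
  calc a m ≤ (m * (p * c)) ^ (-p⁻¹) := le_rpow_neg_inv_of_le_rpow_neg hp0 hpos
        (by positivity) (nat_mul_le_rpow_neg_of_le_mul_one_sub hp0 hp1 hnn hrec m hpos)
    _ = (p * c) ^ (-p⁻¹) * (m : ℝ) ^ (-p⁻¹) := by rw [mul_rpow hm0.le hpc.le, mul_comm]

end Recursion

/-- Recursion-to-rate implication (Lemma 1 of Gao, Ing and Yang, 2013): if a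
nonnegative sequence satisfies `a_{m+1} ≤ a_m (1 − c a_m^{1/(2α−1)})`, then there is
`G > 0`, depending only on `α`, `c` and `a₀`, with `a_m ≤ G m^{−(2α−1)}` for all
`m ≥ 1`. -/
theorem stmt_14 (α c a₀ : ℝ) (hα : 1 < α) (hc : 0 < c) :
    ∃ G : ℝ, 0 < G ∧
      ∀ a : ℕ → ℝ, a 0 = a₀ →
        (∀ m, 0 ≤ a m) →
        (∀ m, a (m + 1) ≤ a m * (1 - c * (a m) ^ (1 / (2 * α - 1)))) →
        ∀ m : ℕ, 1 ≤ m → a m ≤ G * (m : ℝ) ^ (-(2 * α - 1)) := by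
  set p := 1 / (2 * α - 1) with hp
  have hp0 : 0 < p := by rw [hp]; exact one_div_pos.mpr (by linarith)
  have hp1 : p ≤ 1 := by rw [hp, div_le_one (by linarith)]; linarith
  have hpinv : p⁻¹ = 2 * α - 1 := by rw [hp, one_div, inv_inv]
  refine ⟨(p * c) ^ (-p⁻¹), rpow_pos_of_pos (mul_pos hp0 hc) _, fun a _ hnn hrec m hm => ?_⟩
  rw [← hpinv]
  exact le_mul_rpow_neg_inv_of_le_mul_one_sub hp0 hp1 hc hnn hrec hm
end
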